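/- arXiv:2311.05172 — 2 statements merged into one kernel-verified Lean document; each statement's English description precedes it below -/
import Mathlib

section
/- Let G be an abelian group, M ⊆ G a submonoid that is sharp and saturated in G, and α ∈ G an element such that neither α nor −α belongs to M. Then: (1) if γ ∈ M and n, m ∈ ℕ satisfy γ + n•α = m•α, then γ = 0 and n = m; (2) consequently, if a, b ∈ M + ℕα and a + b ∈ ℕα (i.e. a + b = m•α for some m ∈ ℕ), then a ∈ ℕα and b ∈ ℕα. -/
/-! In a saturated submonoid `M`, a relation `γ + n • α = m • α` with `γ ∈ M` and `n ≠ m` would put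
a nonzero integer multiple of `α` into `M`, hence `α` or `-α`. So `n = m` and `γ = 0`. For (2),
writing `a = γ₁ + n₁ • α` and `b = γ₂ + n₂ • α`, part (1) gives `γ₁ + γ₂ = 0`, and sharpness forces
`γ₁ = γ₂ = 0`. -/

section

variable {G : Type*} [AddCommGroup G] {M : AddSubmonoid G}

theorem mem_or_neg_mem_of_zsmul_mem (hsat : ∀ (x : G) (n : ℕ), 0 < n → n • x ∈ M → x ∈ M)
    {α : G} {k : ℤ} (hk : k ≠ 0) (h : k • α ∈ M) : α ∈ M ∨ -α ∈ M := by
  have hpos : 0 < k.natAbs := Int.natAbs_pos.mpr hk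
  rcases Int.natAbs_eq k with hk' | hk'
  · rw [hk', natCast_zsmul] at h
    exact .inl (hsat α _ hpos h)
  · rw [hk', neg_zsmul, natCast_zsmul, ← smul_neg] at h
    exact .inr (hsat (-α) _ hpos h)

theorem eq_zero_and_eq_of_add_nsmul_eq_nsmul
    (hsat : ∀ (x : G) (n : ℕ), 0 < n → n • x ∈ M → x ∈ M)
    {α : G} (hα : α ∉ M) (hα' : -α ∉ M) {γ : G} (hγ : γ ∈ M) {n m : ℕ}
    (h : γ + n • α = m • α) : γ = 0 ∧ n = m := by
  have hγ_eq : γ = ((m : ℤ) - n) • α := by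
    rw [sub_zsmul, natCast_zsmul, natCast_zsmul, ← h, add_neg_cancel_right]
  have hnm : n = m := by
    by_contra hne
    have hk : (m : ℤ) - n ≠ 0 := sub_ne_zero.mpr (by exact_mod_cast Ne.symm hne)
    rw [hγ_eq] at hγ
    exact (mem_or_neg_mem_of_zsmul_mem hsat hk hγ).elim hα hα'
  subst hnm
  exact ⟨add_eq_right.mp h, rfl⟩

theorem eq_zero_of_add_eq_zero_of_sharp (hsharp : ∀ x ∈ M, -x ∈ M → x = 0)
    {x y : G} (hx : x ∈ M) (hy : y ∈ M) (h : x + y = 0) : x = 0 :=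
  hsharp x hx (neg_eq_of_add_eq_zero_right h ▸ hy)

end

/-- Let `G` be an abelian group, `M ⊆ G` a submonoid that is sharp and saturated in `G`,
and `α ∈ G` such that neither `α` nor `-α` belongs to `M`.  Then:
(1) if `γ ∈ M` and `γ + n•α = m•α` (for `n m : ℕ`) then `γ = 0` and `n = m`;
(2) consequently, if `a, b ∈ M + ℕα` and `a + b ∈ ℕα`, then `a ∈ ℕα` and `b ∈ ℕα`. -/
theorem saturated_sharp_ideal {G : Type*} [AddCommGroup G] (M : AddSubmonoid G)
    (hsharp : ∀ x ∈ M, -x ∈ M → x = 0)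
    (hsat : ∀ (x : G) (n : ℕ), 0 < n → n • x ∈ M → x ∈ M)
    (α : G) (hα : α ∉ M) (hα' : -α ∉ M) :
    (∀ γ ∈ M, ∀ n m : ℕ, γ + n • α = m • α → γ = 0 ∧ n = m) ∧
    (∀ a b : G,
      (∃ γ ∈ M, ∃ n : ℕ, a = γ + n • α) →
      (∃ γ ∈ M, ∃ n : ℕ, b = γ + n • α) →
      (∃ m : ℕ, a + b = m • α) →
      (∃ k : ℕ, a = k • α) ∧ (∃ k : ℕ, b = k • α)) := by
  refine ⟨fun γ hγ n m h ↦ eq_zero_and_eq_of_add_nsmul_eq_nsmul hsat hα hα' hγ h, ?_⟩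
  rintro a b ⟨γ₁, hγ₁, n₁, rfl⟩ ⟨γ₂, hγ₂, n₂, rfl⟩ ⟨m, hm⟩
  have hsum : (γ₁ + γ₂) + (n₁ + n₂) • α = m • α := by
    rw [← hm, add_smul]
    abel
  have h0 := (eq_zero_and_eq_of_add_nsmul_eq_nsmul hsat hα hα' (M.add_mem hγ₁ hγ₂) hsum).1
  have hγ₁0 := eq_zero_of_add_eq_zero_of_sharp hsharp hγ₁ hγ₂ h0
  have hγ₂0 := eq_zero_of_add_eq_zero_of_sharp hsharp hγ₂ hγ₁ (add_comm γ₁ γ₂ ▸ h0)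
  exact ⟨⟨n₁, by rw [hγ₁0, zero_add]⟩, ⟨n₂, by rw [hγ₂0, zero_add]⟩⟩
end

section
/- Let R = ℤ[x,y]/(x², y²). Then the element xy is nonzero in R, but the two ring homomorphisms φ_U : R → ℤ[x,t]/(x²) determined by x ↦ x, y ↦ x·t, and φ_V : R → ℤ[y,s]/(y²) determined by x ↦ y·s, y ↦ y, are well defined (i.e. x² and y² map to 0 in each target) and both send xy to 0. -/
noncomputable section

open MvPolynomial

/-- The polynomial ring `ℤ[x,y]` (also used, with variables renamed, as `ℤ[x,t]` and
`ℤ[y,s]`), with `x = X 0`, `y = X 1` (resp. `x = X 0, t = X 1` and `y = X 0, s = X 1`). -/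
abbrev A2 : Type := MvPolynomial (Fin 2) ℤ

/-- The ideal `(x², y²)` of `ℤ[x,y]`, so that `R = ℤ[x,y]/(x², y²)`. -/
def IXY : Ideal A2 := Ideal.span {X 0 ^ 2, X 1 ^ 2}

/-- The ideal `(x²)` of `ℤ[x,t]` (the first chart of the blowup). -/
def JU : Ideal A2 := Ideal.span {X 0 ^ 2}

/-- The ideal `(y²)` of `ℤ[y,s]` (the second chart of the blowup). -/
def JV : Ideal A2 := Ideal.span {X 0 ^ 2}

/-- The ring homomorphism `ℤ[x,y] → ℤ[x,t]`, `x ↦ x`, `y ↦ x·t`. -/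
def phiU : A2 →+* A2 := (aeval ![X 0, X 0 * X 1]).toRingHom

/-- The ring homomorphism `ℤ[x,y] → ℤ[y,s]`, `x ↦ y·s`, `y ↦ y`. -/
def phiV : A2 →+* A2 := (aeval ![X 0 * X 1, X 0]).toRingHom

/-!
`xy` is a monomial divisible by neither `x²` nor `y²`, and membership in a monomial ideal is
decided monomial by monomial, so `xy ∉ (x², y²)`. On the first chart `x² ↦ x²`, `y² ↦ x²t²` and
`xy ↦ x²t` are all multiples of `x²`; the second chart is symmetric.
-/

theorem X_mul_X_notMem_span_sq {σ R : Type*} [CommSemiring R] [Nontrivial R] {i j : σ}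
    (hij : i ≠ j) : X i * X j ∉ Ideal.span {(X i ^ 2 : MvPolynomial σ R), X j ^ 2} := by
  have hspan : ({X i ^ 2, X j ^ 2} : Set (MvPolynomial σ R)) =
      (fun s => monomial s 1) '' {Finsupp.single i 2, Finsupp.single j 2} := by
    simp [Set.image_pair, X_pow_eq_monomial]
  rw [hspan, X, X, monomial_mul, one_mul, mem_ideal_span_monomial_image]
  intro h
  obtain ⟨m, hm, hle⟩ := h (Finsupp.single i 1 + Finsupp.single j 1)
    (by classical simp [support_monomial])
  rcases hm with rfl | rfl <;> simp [Finsupp.single_le_iff, hij, hij.symm] at hle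

@[simp] lemma phiU_X_zero : phiU (X 0) = X 0 := by simp [phiU]

@[simp] lemma phiU_X_one : phiU (X 1) = X 0 * X 1 := by simp [phiU]

@[simp] lemma phiV_X_zero : phiV (X 0) = X 0 * X 1 := by simp [phiV]

@[simp] lemma phiV_X_one : phiV (X 1) = X 0 := by simp [phiV]

/-- In `R = ℤ[x,y]/(x², y²)` the element `xy` is nonzero, but the two ring homomorphisms
`φ_U : R → ℤ[x,t]/(x²)` (`x ↦ x`, `y ↦ x·t`) and `φ_V : R → ℤ[y,s]/(y²)` (`x ↦ y·s`, `y ↦ y`)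
are well defined (`x²` and `y²` map into the target ideals) and both send `xy` to `0`. -/
theorem xy_nonzero_but_dies_on_blowup_charts :
    Ideal.Quotient.mk IXY (X 0 * X 1) ≠ 0 ∧
    (phiU (X 0 ^ 2) ∈ JU ∧ phiU (X 1 ^ 2) ∈ JU) ∧
    (phiV (X 0 ^ 2) ∈ JV ∧ phiV (X 1 ^ 2) ∈ JV) ∧
    phiU (X 0 * X 1) ∈ JU ∧ phiV (X 0 * X 1) ∈ JV := by
  refine ⟨?_, ⟨?_, ?_⟩, ⟨?_, ?_⟩, ?_, ?_⟩
  · rw [Ne, Ideal.Quotient.eq_zero_iff_mem]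
    exact X_mul_X_notMem_span_sq (by decide)
  all_goals
    simp only [JU, JV, Ideal.mem_span_singleton, map_pow, map_mul, phiU_X_zero, phiU_X_one,
      phiV_X_zero, phiV_X_one]
  · exact dvd_rfl
  · exact ⟨X 1 ^ 2, by ring⟩
  · exact ⟨X 1 ^ 2, by ring⟩
  · exact dvd_rfl
  · exact ⟨X 1, by ring⟩
  · exact ⟨X 1, by ring⟩

end
end
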